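/- Let R be a finite (not necessarily unital) ring with |Cent(R)| = 5. If S and T are any two distinct proper centralizers of R (elements of Cent(R) other than R), then |S|·|T|/|R| ≤ |Z(R)| ≤ |R|/6. -/

import Mathlib

/-- The centralizer of `r` in a (not necessarily unital) ring: `{s | r*s = s*r}`. -/
def rCentralizer {R : Type*} [NonUnitalRing R] (r : R) : Set R := {s | r * s = s * r}

/-- The set of all centralizers of elements of `R`. -/
def Cent (R : Type*) [NonUnitalRing R] : Set (Set R) :=
  Set.range (fun r : R => rCentralizer r)

/-- The center of a (not necessarily unital) ring, as a set. -/
def rCenter (R : Type*) [NonUnitalRing R] : Set R := {s | ∀ r : R, r * s = s * r}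

/-!
Centralizers are additive subgroups containing `Z(R)`, and no group is the union of two proper
subgroups. Hence a noncentral `z` lies outside at least two centralizers (those of the elements
outside `C(z)` cannot all coincide), so with only four proper centralizers it lies in at most two
of them. This forces commuting noncentral `u`, `v` to have the same centralizer: otherwise
`R = (C(u) ∩ C(v)) ∪ A ∪ B` for the two centralizers `A`, `B` avoiding `u` (and `v`), and
translating `u` and `v` by an element outside `(C(u) ∩ C(v)) ∪ B` shows `u - v ∈ B`, so the
noncentral `u - v` lies in three proper centralizers.
Consequently two distinct proper centralizers meet exactly in `Z(R)`.

The lower bound is then `|S| |T| ≤ |S ∩ T| |R|`. For the upper bound, the four sets `D \ Z(R)`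
are disjoint of size at least `|Z(R)|`, so `[R : Z(R)] ≥ 5`; and the index is not the prime `5`,
since it factors through the index of a proper centralizer.
-/

namespace AddSubgroup

variable {G : Type*} [AddGroup G]

theorem exists_notMem_and_notMem {H K : AddSubgroup G} (hH : H ≠ ⊤) (hK : K ≠ ⊤) :
    ∃ x, x ∉ H ∧ x ∉ K := by
  by_contra! h
  have := AddSubgroupClass.subset_union.mp fun x (_ : x ∈ (⊤ : AddSubgroup G)) =>
    (em (x ∈ H)).imp_right (h x)
  exact this.elim (fun h => hH (top_le_iff.mp h)) (fun h => hK (top_le_iff.mp h))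

theorem sub_mem_of_forall_mem_or_mem_or_mem {H K L : AddSubgroup G} (hH : H ≠ ⊤) (hL : L ≠ ⊤)
    (hcover : ∀ x, x ∈ H ∨ x ∈ K ∨ x ∈ L) {a b : G} (haH : a ∈ H) (hbH : b ∈ H)
    (haK : a ∉ K) (hbK : b ∉ K) : a - b ∈ L := by
  obtain ⟨p, hpH, hpL⟩ := exists_notMem_and_notMem hH hL
  have hpK : p ∈ K := ((hcover p).resolve_left hpH).resolve_right hpL
  have hL_of_mem {c : G} (hcH : c ∈ H) (hcK : c ∉ K) : c + p ∈ L :=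
    ((hcover _).resolve_left fun h => hpH ((add_mem_cancel_left hcH).mp h)).resolve_left
      fun h => hcK ((add_mem_cancel_right hpK).mp h)
  simpa using sub_mem (hL_of_mem haH haK) (hL_of_mem hbH hbK)

theorem card_mul_card_le_card_inf_mul_card [Finite G] (H K : AddSubgroup G) :
    Nat.card H * Nat.card K ≤ Nat.card ↥(H ⊓ K) * Nat.card G := by
  have hHK := (H ⊓ K).card_mul_index
  have hpos : 0 < (H ⊓ K).index := Nat.pos_of_ne_zero index_ne_zero_of_finite
  refine le_of_mul_le_mul_right ?_ hpos
  calc Nat.card H * Nat.card K * (H ⊓ K).index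
      ≤ Nat.card H * Nat.card K * (H.index * K.index) := Nat.mul_le_mul_left _ index_inf_le
    _ = Nat.card G * Nat.card G := by rw [mul_mul_mul_comm, H.card_mul_index, K.card_mul_index]
    _ = Nat.card ↥(H ⊓ K) * Nat.card G * (H ⊓ K).index := by rw [← hHK]; ring

theorem two_mul_card_le_card_of_lt [Finite G] {H K : AddSubgroup G} (hHK : H < K) :
    2 * Nat.card H ≤ Nat.card K := by
  have hcard : Nat.card H * H.relIndex K = Nat.card K := by
    rw [← relIndex_bot_left, ← relIndex_bot_left, relIndex_mul_relIndex _ _ _ bot_le hHK.le]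
  have hne_one : H.relIndex K ≠ 1 := fun h => hHK.not_ge (relIndex_eq_one.mp h)
  have hne_zero : H.relIndex K ≠ 0 := by
    intro h
    rw [h, mul_zero] at hcard
    exact Nat.card_pos.ne hcard
  rw [← hcard, mul_comm]
  exact Nat.mul_le_mul_left _ (by omega)

theorem not_prime_index_of_lt_of_lt {H K : AddSubgroup G} (hHK : H < K) (hK : K < ⊤) :
    ¬ H.index.Prime := by
  rw [← relIndex_mul_index hHK.le, Nat.prime_mul_iff]
  rintro (⟨-, h⟩ | ⟨-, h⟩)
  · exact hK.ne (index_eq_one.mp h)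
  · exact hHK.not_ge (relIndex_eq_one.mp h)

end AddSubgroup

theorem Set.ncard_mul_le_ncard_compl {α : Type*} [Finite α] {Z : Set α} {𝒟 : Set (Set α)}
    {m : ℕ} (hm : ∀ D ∈ 𝒟, m ≤ (D \ Z).ncard) (h𝒟 : 𝒟.Pairwise fun D D' => D ∩ D' ⊆ Z) :
    𝒟.ncard * m ≤ Zᶜ.ncard := by
  have hdisj : 𝒟.PairwiseDisjoint (· \ Z) := fun D hD D' hD' hne =>
    Set.disjoint_left.mpr fun x hx hx' => hx.2 (h𝒟 hD hD' hne ⟨hx.1, hx'.1⟩)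
  have hfin : 𝒟.Finite := Set.toFinite 𝒟
  calc 𝒟.ncard * m = hfin.toFinset.card • m := by
        rw [Set.ncard_eq_toFinset_card _ hfin, smul_eq_mul]
    _ ≤ ∑ D ∈ hfin.toFinset, (D \ Z).ncard :=
        Finset.card_nsmul_le_sum _ _ _ fun D hD => hm D (hfin.mem_toFinset.mp hD)
    _ = (⋃ D ∈ 𝒟, D \ Z).ncard := by
        rw [hfin.ncard_biUnion (fun _ _ => Set.toFinite _) hdisj,
          finsum_mem_eq_finite_toFinset_sum]
    _ ≤ Zᶜ.ncard := Set.ncard_le_ncard (Set.iUnion₂_subset fun D _ => Set.sdiff_subset_compl _ _)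

section Centralizer

variable {R : Type*} [NonUnitalRing R]

theorem rCentralizer_eq_centralizer (r : R) : rCentralizer r = Set.centralizer {r} := by
  ext s
  simp [rCentralizer, Set.mem_centralizer_iff]

theorem rCenter_eq_center : rCenter R = Set.center R := by
  ext s
  simp [rCenter, Semigroup.mem_center_iff]

def rCentralizerAddSubgroup (r : R) : AddSubgroup R :=
  (NonUnitalSubring.centralizer {r}).toAddSubgroup.copy _ (rCentralizer_eq_centralizer r)

def rCenterAddSubgroup (R : Type*) [NonUnitalRing R] : AddSubgroup R :=
  (NonUnitalSubring.center R).toAddSubgroup.copy _ rCenter_eq_center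

@[simp]
theorem coe_rCentralizerAddSubgroup (r : R) :
    (rCentralizerAddSubgroup r : Set R) = rCentralizer r := rfl

theorem ncard_rCentralizer (x : R) :
    (rCentralizer x).ncard = Nat.card (rCentralizerAddSubgroup x) :=
  (Nat.card_coe_set_eq _).symm

theorem ncard_rCenter : (rCenter R).ncard = Nat.card (rCenterAddSubgroup R) :=
  (Nat.card_coe_set_eq _).symm

theorem mem_rCentralizer_comm {x y : R} : y ∈ rCentralizer x ↔ x ∈ rCentralizer y :=
  eq_comm

theorem self_mem_rCentralizer (x : R) : x ∈ rCentralizer x := rfl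

theorem rCenter_subset_rCentralizer (x : R) : rCenter R ⊆ rCentralizer x := fun _ hs => hs x

theorem rCentralizer_eq_univ_iff {x : R} : rCentralizer x = Set.univ ↔ x ∈ rCenter R := by
  simp only [Set.eq_univ_iff_forall, rCenter, rCentralizer, Set.mem_ofPred_eq]
  exact forall_congr' fun _ => eq_comm

theorem rCentralizerAddSubgroup_eq_top_iff {x : R} :
    rCentralizerAddSubgroup x = ⊤ ↔ x ∈ rCenter R := by
  rw [← rCentralizer_eq_univ_iff, ← SetLike.coe_set_eq, coe_rCentralizerAddSubgroup,
    AddSubgroup.coe_top]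

theorem rCenterAddSubgroup_lt_rCentralizerAddSubgroup {x : R} (hx : x ∉ rCenter R) :
    rCenterAddSubgroup R < rCentralizerAddSubgroup x :=
  SetLike.lt_iff_le_and_exists.mpr ⟨rCenter_subset_rCentralizer x, x, self_mem_rCentralizer x, hx⟩

theorem rCentralizer_eq_of_sub_mem_rCenter {x y : R} (h : x - y ∈ rCenter R) :
    rCentralizer x = rCentralizer y := by
  ext s
  have hs : x * s - s * x = y * s - s * y := by
    have := h s
    rw [mul_sub, sub_mul] at this
    exact sub_eq_sub_iff_sub_eq_sub.mp this.symm
  change x * s = s * x ↔ y * s = s * y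
  rw [← sub_eq_zero, hs, sub_eq_zero]

theorem rCentralizer_mem_Cent (x : R) : rCentralizer x ∈ Cent R := ⟨x, rfl⟩

theorem univ_mem_Cent : Set.univ ∈ Cent R :=
  ⟨0, rCentralizer_eq_univ_iff.mpr fun r => by rw [mul_zero, zero_mul]⟩

theorem exists_notMem_rCenter_of_mem_Cent {D : Set R} (hD : D ∈ Cent R) (hDu : D ≠ Set.univ) :
    ∃ a, a ∉ rCenter R ∧ rCentralizer a = D := by
  obtain ⟨a, rfl⟩ := hD
  exact ⟨a, mt rCentralizer_eq_univ_iff.mpr hDu, rfl⟩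

theorem ncard_univ_rCentralizer_pair {u v : R} (hu : u ∉ rCenter R) (hv : v ∉ rCenter R)
    (huv : rCentralizer u ≠ rCentralizer v) :
    ({Set.univ, rCentralizer u, rCentralizer v} : Set (Set R)).ncard = 3 :=
  Set.ncard_eq_three.mpr ⟨_, _, _, fun h => hu (rCentralizer_eq_univ_iff.mp h.symm),
    fun h => hv (rCentralizer_eq_univ_iff.mp h.symm), huv, rfl⟩

theorem exists_rCentralizer_ne_of_notMem_rCenter {z : R} (hz : z ∉ rCenter R) :
    ∃ x y, z ∉ rCentralizer x ∧ z ∉ rCentralizer y ∧ rCentralizer x ≠ rCentralizer y := by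
  obtain ⟨x, hx⟩ : ∃ x, x ∉ rCentralizer z := by
    by_contra! h
    exact hz (rCentralizer_eq_univ_iff.mp (Set.eq_univ_of_forall h))
  have hzx : z ∉ rCentralizer x := mt mem_rCentralizer_comm.mp hx
  by_contra! h
  -- otherwise `C(z) ∪ C(x)` would be all of `R`
  obtain ⟨y, hyz, hyx⟩ := AddSubgroup.exists_notMem_and_notMem
    (mt rCentralizerAddSubgroup_eq_top_iff.mp hz)
    (mt rCentralizerAddSubgroup_eq_top_iff.mp fun hxc => hx (rCenter_subset_rCentralizer z hxc))
  have hyx' : y ∈ rCentralizer x :=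
    h y x (mt mem_rCentralizer_comm.mpr hyz) hzx ▸ self_mem_rCentralizer y
  exact hyx hyx'

theorem mem_inter_or_mem_or_mem_of_Cent_sdiff_eq {u v : R} {A B : Set R}
    (hAB : Cent R \ {D | u ∈ D} = {A, B}) (huv : ∀ D ∈ Cent R, u ∈ D → v ∈ D) (x : R) :
    x ∈ rCentralizer u ∩ rCentralizer v ∨ x ∈ A ∨ x ∈ B := by
  by_cases hux : u ∈ rCentralizer x
  · have hvx := huv _ (rCentralizer_mem_Cent x) hux
    exact Or.inl ⟨mem_rCentralizer_comm.mp hux, mem_rCentralizer_comm.mp hvx⟩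
  · have hx : rCentralizer x ∈ ({A, B} : Set (Set R)) := hAB ▸ ⟨rCentralizer_mem_Cent x, hux⟩
    obtain hx | hx : rCentralizer x = A ∨ rCentralizer x = B := hx
    exacts [Or.inr (Or.inl (hx ▸ self_mem_rCentralizer x)),
      Or.inr (Or.inr (hx ▸ self_mem_rCentralizer x))]

end Centralizer

section FiveCentralizers

variable {R : Type*} [NonUnitalRing R] [Finite R]

theorem Cent_inter_setOf_mem_eq_of_ncard_Cent_eq_five (h5 : (Cent R).ncard = 5) {u v z : R}
    (hu : u ∉ rCenter R) (hv : v ∉ rCenter R) (huv : rCentralizer u ≠ rCentralizer v)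
    (hz : z ∉ rCenter R) (hzu : z ∈ rCentralizer u) (hzv : z ∈ rCentralizer v) :
    Cent R ∩ {D | z ∈ D} = {Set.univ, rCentralizer u, rCentralizer v} := by
  obtain ⟨x, y, hzx, hzy, hxy⟩ := exists_rCentralizer_ne_of_notMem_rCenter hz
  have hsplit := Set.ncard_inter_add_ncard_sdiff_eq_ncard (Cent R) {D | z ∈ D}
  have hout : 2 ≤ (Cent R \ {D | z ∈ D}).ncard := by
    rw [← Set.ncard_pair hxy]
    refine Set.ncard_le_ncard ?_
    rintro D (rfl | rfl)
    exacts [⟨rCentralizer_mem_Cent x, hzx⟩, ⟨rCentralizer_mem_Cent y, hzy⟩]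
  have hsub : ({Set.univ, rCentralizer u, rCentralizer v} : Set (Set R)) ⊆
      Cent R ∩ {D | z ∈ D} := by
    rintro D (rfl | rfl | rfl)
    exacts [⟨univ_mem_Cent, Set.mem_univ z⟩, ⟨rCentralizer_mem_Cent u, hzu⟩,
      ⟨rCentralizer_mem_Cent v, hzv⟩]
  refine (Set.eq_of_subset_of_ncard_le hsub ?_).symm
  rw [ncard_univ_rCentralizer_pair hu hv huv]
  omega

theorem rCentralizer_eq_of_mem_rCentralizer_of_ncard_Cent_eq_five (h5 : (Cent R).ncard = 5)
    {u v : R} (hu : u ∉ rCenter R) (hv : v ∉ rCenter R) (huv : v ∈ rCentralizer u) :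
    rCentralizer u = rCentralizer v := by
  by_contra hne
  have hvu : u ∈ rCentralizer v := mem_rCentralizer_comm.mp huv
  have hthrough {z : R} (hz : z ∉ rCenter R) (hzu : z ∈ rCentralizer u)
      (hzv : z ∈ rCentralizer v) :=
    Cent_inter_setOf_mem_eq_of_ncard_Cent_eq_five h5 hu hv hne hz hzu hzv
  have hu' := hthrough hu (self_mem_rCentralizer u) hvu
  have hv' := hthrough hv huv (self_mem_rCentralizer v)
  have hiff {D : Set R} (hD : D ∈ Cent R) : u ∈ D ↔ v ∈ D := by
    rw [← hv'] at hu'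
    exact ⟨fun h => (hu' ▸ ⟨hD, h⟩ : D ∈ Cent R ∩ {D | v ∈ D}).2,
      fun h => (hu' ▸ ⟨hD, h⟩ : D ∈ Cent R ∩ {D | u ∈ D}).2⟩
  obtain ⟨A, B, -, hAB⟩ : ∃ A B, A ≠ B ∧ Cent R \ {D | u ∈ D} = {A, B} := by
    refine Set.ncard_eq_two.mp ?_
    have := Set.ncard_inter_add_ncard_sdiff_eq_ncard (Cent R) {D | u ∈ D}
    rw [hu', ncard_univ_rCentralizer_pair hu hv hne, h5] at this
    omega
  have hcover := mem_inter_or_mem_or_mem_of_Cent_sdiff_eq hAB fun D hD => (hiff hD).mp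
  obtain ⟨⟨a, rfl⟩, huA⟩ : A ∈ Cent R \ {D | u ∈ D} := hAB ▸ Set.mem_insert _ _
  obtain ⟨⟨b, rfl⟩, huB⟩ : B ∈ Cent R \ {D | u ∈ D} := hAB ▸ Set.mem_insert_of_mem _ rfl
  have hdiff_mem : u - v ∈ rCentralizer b :=
    AddSubgroup.sub_mem_of_forall_mem_or_mem_or_mem
      (H := rCentralizerAddSubgroup u ⊓ rCentralizerAddSubgroup v)
      (K := rCentralizerAddSubgroup a) (L := rCentralizerAddSubgroup b)
      (ne_top_of_le_ne_top (mt rCentralizerAddSubgroup_eq_top_iff.mp hu) inf_le_left)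
      (fun h => huB (show u ∈ rCentralizerAddSubgroup b by rw [h]; trivial)) hcover
      ⟨self_mem_rCentralizer u, hvu⟩ ⟨huv, self_mem_rCentralizer v⟩ huA
      (mt (hiff (rCentralizer_mem_Cent a)).mpr huA)
  have hdiff_noncentral : u - v ∉ rCenter R := fun h => hne (rCentralizer_eq_of_sub_mem_rCenter h)
  have hdiff_through := hthrough hdiff_noncentral
    ((rCentralizerAddSubgroup u).sub_mem (self_mem_rCentralizer u) huv)
    ((rCentralizerAddSubgroup v).sub_mem hvu (self_mem_rCentralizer v))
  exact huB ((hu'.trans hdiff_through.symm ▸ ⟨rCentralizer_mem_Cent b, hdiff_mem⟩ :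
    rCentralizer b ∈ Cent R ∩ {D | u ∈ D}).2)

theorem inter_eq_rCenter_of_ncard_Cent_eq_five (h5 : (Cent R).ncard = 5) {a b : R}
    (ha : a ∉ rCenter R) (hb : b ∉ rCenter R) (hab : rCentralizer a ≠ rCentralizer b) :
    rCentralizer a ∩ rCentralizer b = rCenter R := by
  refine Set.Subset.antisymm (fun z ⟨hza, hzb⟩ => ?_)
    (Set.subset_inter (rCenter_subset_rCentralizer a) (rCenter_subset_rCentralizer b))
  by_contra hz
  have hzC {c : R} (hc : c ∉ rCenter R) (hzc : z ∈ rCentralizer c) :=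
    rCentralizer_eq_of_mem_rCentralizer_of_ncard_Cent_eq_five h5 hz hc
      (mem_rCentralizer_comm.mp hzc)
  exact hab ((hzC ha hza).symm.trans (hzC hb hzb))

theorem ncard_mul_ncard_le_of_ncard_Cent_eq_five (h5 : (Cent R).ncard = 5) {a b : R}
    (ha : a ∉ rCenter R) (hb : b ∉ rCenter R) (hab : rCentralizer a ≠ rCentralizer b) :
    (rCentralizer a).ncard * (rCentralizer b).ncard ≤ (rCenter R).ncard * Nat.card R := by
  have hinf : rCentralizerAddSubgroup a ⊓ rCentralizerAddSubgroup b = rCenterAddSubgroup R :=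
    SetLike.coe_injective (inter_eq_rCenter_of_ncard_Cent_eq_five h5 ha hb hab)
  rw [ncard_rCentralizer, ncard_rCentralizer, ncard_rCenter, ← hinf]
  exact AddSubgroup.card_mul_card_le_card_inf_mul_card _ _

theorem ncard_rCenter_le_ncard_sdiff {a : R} (ha : a ∉ rCenter R) :
    (rCenter R).ncard ≤ (rCentralizer a \ rCenter R).ncard := by
  have h := AddSubgroup.two_mul_card_le_card_of_lt
    (rCenterAddSubgroup_lt_rCentralizerAddSubgroup ha)
  rw [← ncard_rCentralizer, ← ncard_rCenter] at h
  rw [Set.ncard_sdiff (rCenter_subset_rCentralizer a)]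
  omega

theorem four_mul_ncard_rCenter_le_ncard_compl_of_ncard_Cent_eq_five
    (h5 : (Cent R).ncard = 5) : 4 * (rCenter R).ncard ≤ (rCenter R)ᶜ.ncard := by
  have hproper : (Cent R \ {Set.univ}).ncard = 4 := by
    rw [Set.ncard_sdiff_singleton_of_mem univ_mem_Cent, h5]
  rw [← hproper]
  refine Set.ncard_mul_le_ncard_compl (fun D ⟨hD, hDu⟩ => ?_)
    fun D ⟨hD, hDu⟩ D' ⟨hD', hDu'⟩ hne => ?_
  · obtain ⟨a, ha, rfl⟩ := exists_notMem_rCenter_of_mem_Cent hD hDu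
    exact ncard_rCenter_le_ncard_sdiff ha
  · obtain ⟨a, ha, rfl⟩ := exists_notMem_rCenter_of_mem_Cent hD hDu
    obtain ⟨b, hb, rfl⟩ := exists_notMem_rCenter_of_mem_Cent hD' hDu'
    exact (inter_eq_rCenter_of_ncard_Cent_eq_five h5 ha hb hne).le

theorem six_mul_ncard_rCenter_le_of_ncard_Cent_eq_five (h5 : (Cent R).ncard = 5) :
    6 * (rCenter R).ncard ≤ Nat.card R := by
  obtain ⟨a, ha⟩ : ∃ a : R, a ∉ rCenter R := by
    by_contra! h
    have hCent : Cent R ⊆ {Set.univ} := by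
      rintro _ ⟨a, rfl⟩
      exact rCentralizer_eq_univ_iff.mpr (h a)
    have := Set.ncard_le_ncard hCent
    rw [Set.ncard_singleton] at this
    omega
  have hfour := four_mul_ncard_rCenter_le_ncard_compl_of_ncard_Cent_eq_five h5
  have hcompl := Set.ncard_add_ncard_compl (rCenter R)
  have hindex := (rCenterAddSubgroup R).card_mul_index
  rw [← ncard_rCenter] at hindex
  have hpos : 0 < (rCenter R).ncard :=
    (Set.ncard_pos (Set.toFinite _)).mpr ⟨0, fun r => by rw [mul_zero, zero_mul]⟩
  have hindex_ne : (rCenterAddSubgroup R).index ≠ 5 := fun h =>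
    AddSubgroup.not_prime_index_of_lt_of_lt (rCenterAddSubgroup_lt_rCentralizerAddSubgroup ha)
      (lt_top_iff_ne_top.mpr (mt rCentralizerAddSubgroup_eq_top_iff.mp ha)) (h ▸ Nat.prime_five)
  have hfive_le : 5 ≤ (rCenterAddSubgroup R).index := by
    by_contra! h
    nlinarith
  nlinarith [(by omega : 6 ≤ (rCenterAddSubgroup R).index)]

end FiveCentralizers

/-- In a finite `5`-centralizer ring, any two distinct proper centralizers `S`, `T`
satisfy `|S||T|/|R| ≤ |Z(R)| ≤ |R|/6`. -/
theorem five_centralizer_center_bounds (R : Type*) [NonUnitalRing R] [Finite R]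
    (h5 : (Cent R).ncard = 5) (S T : Set R)
    (hS : S ∈ Cent R) (hT : T ∈ Cent R)
    (hSu : S ≠ Set.univ) (hTu : T ≠ Set.univ) (hST : S ≠ T) :
    ((S.ncard : ℚ) * T.ncard) / (Nat.card R) ≤ ((rCenter R).ncard : ℚ) ∧
      ((rCenter R).ncard : ℚ) ≤ (Nat.card R : ℚ) / 6 := by
  obtain ⟨a, ha, rfl⟩ := exists_notMem_rCenter_of_mem_Cent hS hSu
  obtain ⟨b, hb, rfl⟩ := exists_notMem_rCenter_of_mem_Cent hT hTu
  have hcard : (0 : ℚ) < Nat.card R := by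
    have : Nonempty R := ⟨0⟩
    exact_mod_cast Nat.card_pos
  constructor
  · rw [div_le_iff₀ hcard]
    exact_mod_cast ncard_mul_ncard_le_of_ncard_Cent_eq_five h5 ha hb hST
  · rw [le_div_iff₀ (by norm_num)]
    have := six_mul_ncard_rCenter_le_of_ncard_Cent_eq_five h5
    exact_mod_cast (by omega : (rCenter R).ncard * 6 ≤ Nat.card R)
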